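/- Let U ⊆ ℂ be open and let γ : ℂ → ℂ be holomorphic on U and satisfy the Chazy equation γ''' = 6·γ·γ'' − 9·(γ')² on U. Let q ∈ ℂ, q ≠ 0. Define F(t₁,t₂,t₃) = −(1/4)·t₁·t₂² + (1/2)·t₁²·t₃ − (πi/32)·t₂⁴·( (1 − 2πi·t₃/q)⁻²·γ( 2πi·t₃/(1 − 2πi·t₃/q) ) + (2/q)·(1 − 2πi·t₃/q)⁻¹ ). Then F satisfies the WDVV system (F_i·F₁⁻¹·F_j = F_j·F₁⁻¹·F_i for all i, j ∈ {1,2,3}) at every point (t₁,t₂,t₃) ∈ ℂ³ such that 1 − 2πi·t₃/q ≠ 0 and 2πi·t₃/(1 − 2πi·t₃/q) ∈ U. -/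

import Mathlib

open Complex Real

/-- Partial derivative of a function of three complex variables in the `i`-th direction. -/
noncomputable def pd (i : Fin 3) (F : (Fin 3 → ℂ) → ℂ) : (Fin 3 → ℂ) → ℂ :=
  fun x => fderiv ℂ F x (Pi.single i 1)

/-- The matrix `F_i` with entries `(F_i)_{mn} = ∂³F/∂t_i∂t_m∂t_n`. -/
noncomputable def Fmat (F : (Fin 3 → ℂ) → ℂ) (x : Fin 3 → ℂ) (i : Fin 3) :
    Matrix (Fin 3) (Fin 3) ℂ :=
  Matrix.of fun m n => pd i (pd m (pd n F)) x

/-- The deformed prepotential built from a Chazy solution `γ` and a parameter `q ≠ 0`. -/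
noncomputable def Fdef (γ : ℂ → ℂ) (q : ℂ) : (Fin 3 → ℂ) → ℂ :=
  fun t => -(1/4) * t 0 * (t 1) ^ 2 + (1/2) * (t 0) ^ 2 * t 2
    - ((π : ℂ) * I / 32) * (t 1) ^ 4 *
        (((1 - 2 * (π : ℂ) * I * t 2 / q) ^ 2)⁻¹
            * γ (2 * (π : ℂ) * I * t 2 / (1 - 2 * (π : ℂ) * I * t 2 / q))
          + (2 / q) * (1 - 2 * (π : ℂ) * I * t 2 / q)⁻¹)

noncomputable def sf (q z : ℂ) : ℂ := 1 - 2 * (π:ℂ) * I * z / q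
noncomputable def mf (q z : ℂ) : ℂ := 2 * (π:ℂ) * I * z / sf q z

lemma hasDerivAt_sf (q z : ℂ) : HasDerivAt (sf q) (-(2 * (π:ℂ) * I / q)) z := by
  have : HasDerivAt (fun y : ℂ => 2 * (π:ℂ) * I * y / q) (2 * (π:ℂ) * I / q) z := by
    simpa using ((hasDerivAt_id z).const_mul (2 * (π:ℂ) * I)).div_const q
  exact this.const_sub 1

lemma hasDerivAt_mf {q z : ℂ} (hq : q ≠ 0) (hs : sf q z ≠ 0) :
    HasDerivAt (mf q) (2 * (π:ℂ) * I * (sf q z ^ 2)⁻¹) z := by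
  have hnum : HasDerivAt (fun y : ℂ => 2 * (π:ℂ) * I * y) (2 * (π:ℂ) * I) z := by
    simpa using (hasDerivAt_id z).const_mul (2 * (π:ℂ) * I)
  have H := hnum.div (hasDerivAt_sf q z) hs
  refine H.congr_deriv ?_
  have h1 : 2 * (π:ℂ) * I * sf q z - 2 * (π:ℂ) * I * z * -(2 * (π:ℂ) * I / q)
      = 2 * (π:ℂ) * I := by
    simp only [sf]; field_simp; ring
  rw [h1, div_eq_mul_inv]


lemma hasDerivAt_inv_pow_sf (k : ℕ) (hk : k ≠ 0) {q z : ℂ} (hs : sf q z ≠ 0) :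
    HasDerivAt (fun y => (sf q y ^ k)⁻¹)
      ((k : ℂ) * (2 * (π:ℂ) * I / q) * (sf q z ^ (k + 1))⁻¹) z := by
  have H := ((hasDerivAt_sf q z).pow k).inv (pow_ne_zero k hs)
  refine H.congr_deriv ?_
  obtain ⟨m, rfl⟩ : ∃ m, k = m + 1 := ⟨k - 1, (Nat.succ_pred_eq_of_pos (Nat.pos_of_ne_zero hk)).symm⟩
  have e1 : (sf q z ^ (m + 1)) ^ 2 = sf q z ^ m * sf q z ^ (m + 1 + 1) := by
    rw [← pow_mul, ← pow_add]; congr 1; ring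
  simp only [Nat.add_sub_cancel, Pi.pow_apply, e1]
  rw [show -((↑(m + 1) : ℂ) * sf q z ^ m * -(2 * (π:ℂ) * I / q))
      = sf q z ^ m * ((↑(m + 1) : ℂ) * (2 * (π:ℂ) * I / q)) by ring]
  rw [mul_div_mul_left _ _ (pow_ne_zero m hs), div_eq_mul_inv]

noncomputable def hf0 (γ : ℂ → ℂ) (q z : ℂ) : ℂ :=
  -((π:ℂ) * I / 32) * ((sf q z ^ 2)⁻¹ * γ (mf q z) + (2 / q) * (sf q z ^ 1)⁻¹)
noncomputable def hf1 (γ : ℂ → ℂ) (q z : ℂ) : ℂ :=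
  -((π:ℂ) * I / 32) * (2 * (π:ℂ) * I) *
    ((2 / q) * (sf q z ^ 3)⁻¹ * γ (mf q z) + (sf q z ^ 4)⁻¹ * deriv γ (mf q z)
      + (2 / q ^ 2) * (sf q z ^ 2)⁻¹)
noncomputable def hf2 (γ : ℂ → ℂ) (q z : ℂ) : ℂ :=
  -((π:ℂ) * I / 32) * (2 * (π:ℂ) * I) ^ 2 *
    ((6 / q ^ 2) * (sf q z ^ 4)⁻¹ * γ (mf q z) + (6 / q) * (sf q z ^ 5)⁻¹ * deriv γ (mf q z)
      + (sf q z ^ 6)⁻¹ * deriv (deriv γ) (mf q z) + (4 / q ^ 3) * (sf q z ^ 3)⁻¹)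
noncomputable def hf3 (γ : ℂ → ℂ) (q z : ℂ) : ℂ :=
  -((π:ℂ) * I / 32) * (2 * (π:ℂ) * I) ^ 3 *
    ((24 / q ^ 3) * (sf q z ^ 5)⁻¹ * γ (mf q z) + (36 / q ^ 2) * (sf q z ^ 6)⁻¹ * deriv γ (mf q z)
      + (12 / q) * (sf q z ^ 7)⁻¹ * deriv (deriv γ) (mf q z)
      + (sf q z ^ 8)⁻¹ * deriv (deriv (deriv γ)) (mf q z) + (12 / q ^ 4) * (sf q z ^ 4)⁻¹)

lemma hasDerivAt_hf0 {γ : ℂ → ℂ} {q z : ℂ} (hq : q ≠ 0) (hs : sf q z ≠ 0)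
    (hγ : HasDerivAt γ (deriv γ (mf q z)) (mf q z)) :
    HasDerivAt (hf0 γ q) (hf1 γ q z) z := by
  have hmu := hasDerivAt_mf hq hs
  have hcomp : HasDerivAt (fun y => γ (mf q y))
      (deriv γ (mf q z) * (2 * (π:ℂ) * I * (sf q z ^ 2)⁻¹)) z := hγ.comp z hmu
  have i2 := hasDerivAt_inv_pow_sf 2 (by norm_num) hs
  have i1 := hasDerivAt_inv_pow_sf 1 (by norm_num) hs
  have H := ((i2.mul hcomp).add (i1.const_mul (2 / q))).const_mul (-((π:ℂ) * I / 32))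
  refine H.congr_deriv ?_
  unfold hf1
  push_cast
  ring

set_option maxHeartbeats 2000000 in
lemma hasDerivAt_hf1 {γ : ℂ → ℂ} {q z : ℂ} (hq : q ≠ 0) (hs : sf q z ≠ 0)
    (hγ : HasDerivAt γ (deriv γ (mf q z)) (mf q z))
    (hγ1 : HasDerivAt (deriv γ) (deriv (deriv γ) (mf q z)) (mf q z)) :
    HasDerivAt (hf1 γ q) (hf2 γ q z) z := by
  have hmu := hasDerivAt_mf hq hs
  have hc0 : HasDerivAt (fun y => γ (mf q y))
      (deriv γ (mf q z) * (2 * (π:ℂ) * I * (sf q z ^ 2)⁻¹)) z := hγ.comp z hmu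
  have hc1 : HasDerivAt (fun y => deriv γ (mf q y))
      (deriv (deriv γ) (mf q z) * (2 * (π:ℂ) * I * (sf q z ^ 2)⁻¹)) z := hγ1.comp z hmu
  have i3 := hasDerivAt_inv_pow_sf 3 (by norm_num) hs
  have i4 := hasDerivAt_inv_pow_sf 4 (by norm_num) hs
  have i2 := hasDerivAt_inv_pow_sf 2 (by norm_num) hs
  have H := ((((i3.const_mul (2 / q)).mul hc0).add (i4.mul hc1)).add
      (i2.const_mul (2 / q ^ 2))).const_mul (-((π:ℂ) * I / 32) * (2 * (π:ℂ) * I))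
  refine H.congr_deriv ?_
  unfold hf2
  push_cast
  ring

set_option maxHeartbeats 2000000 in
lemma hasDerivAt_hf2 {γ : ℂ → ℂ} {q z : ℂ} (hq : q ≠ 0) (hs : sf q z ≠ 0)
    (hγ : HasDerivAt γ (deriv γ (mf q z)) (mf q z))
    (hγ1 : HasDerivAt (deriv γ) (deriv (deriv γ) (mf q z)) (mf q z))
    (hγ2 : HasDerivAt (deriv (deriv γ)) (deriv (deriv (deriv γ)) (mf q z)) (mf q z)) :
    HasDerivAt (hf2 γ q) (hf3 γ q z) z := by
  have hmu := hasDerivAt_mf hq hs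
  have hc0 : HasDerivAt (fun y => γ (mf q y))
      (deriv γ (mf q z) * (2 * (π:ℂ) * I * (sf q z ^ 2)⁻¹)) z := hγ.comp z hmu
  have hc1 : HasDerivAt (fun y => deriv γ (mf q y))
      (deriv (deriv γ) (mf q z) * (2 * (π:ℂ) * I * (sf q z ^ 2)⁻¹)) z := hγ1.comp z hmu
  have hc2 : HasDerivAt (fun y => deriv (deriv γ) (mf q y))
      (deriv (deriv (deriv γ)) (mf q z) * (2 * (π:ℂ) * I * (sf q z ^ 2)⁻¹)) z := hγ2.comp z hmu
  have i4 := hasDerivAt_inv_pow_sf 4 (by norm_num) hs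
  have i5 := hasDerivAt_inv_pow_sf 5 (by norm_num) hs
  have i6 := hasDerivAt_inv_pow_sf 6 (by norm_num) hs
  have i3 := hasDerivAt_inv_pow_sf 3 (by norm_num) hs
  have H := (((((i4.const_mul (6 / q ^ 2)).mul hc0).add ((i5.const_mul (6 / q)).mul hc1)).add
      (i6.mul hc2)).add (i3.const_mul (4 / q ^ 3))).const_mul
        (-((π:ℂ) * I / 32) * (2 * (π:ℂ) * I) ^ 2)
  refine H.congr_deriv ?_
  unfold hf3
  push_cast
  ring

set_option maxHeartbeats 2000000 in
lemma hf_key {γ : ℂ → ℂ} {q z : ℂ} (hq : q ≠ 0) (hs : sf q z ≠ 0)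
    (hC : deriv (deriv (deriv γ)) (mf q z)
      = 6 * γ (mf q z) * deriv (deriv γ) (mf q z) - 9 * deriv γ (mf q z) ^ 2) :
    hf3 γ q z = 576 * hf1 γ q z ^ 2 - 384 * hf0 γ q z * hf2 γ q z := by
  unfold hf0 hf1 hf2 hf3
  rw [hC]
  ring

lemma pd_eval {G : (Fin 3 → ℂ) → ℂ} {L : (Fin 3 → ℂ) →L[ℂ] ℂ} {t : Fin 3 → ℂ}
    (hG : HasFDerivAt G L t) (n : Fin 3) : pd n G t = L (Pi.single n 1) := by
  unfold pd; rw [hG.fderiv]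

lemma hasFDerivAt_mono {u v w : ℂ → ℂ} {u' v' w' : ℂ} {t : Fin 3 → ℂ}
    (hu : HasDerivAt u u' (t 0)) (hv : HasDerivAt v v' (t 1)) (hw : HasDerivAt w w' (t 2)) :
    HasFDerivAt (fun y : Fin 3 → ℂ => u (y 0) * v (y 1) * w (y 2))
      ((u' * v (t 1) * w (t 2)) • (ContinuousLinearMap.proj 0 : (Fin 3 → ℂ) →L[ℂ] ℂ)
        + (u (t 0) * v' * w (t 2)) • (ContinuousLinearMap.proj 1 : (Fin 3 → ℂ) →L[ℂ] ℂ)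
        + (u (t 0) * v (t 1) * w') • (ContinuousLinearMap.proj 2 : (Fin 3 → ℂ) →L[ℂ] ℂ)) t := by
  have h0 : HasFDerivAt (fun y : Fin 3 → ℂ => u (y 0)) (u' • (ContinuousLinearMap.proj 0 : (Fin 3 → ℂ) →L[ℂ] ℂ)) t :=
    hu.comp_hasFDerivAt t (hasFDerivAt_apply 0 t)
  have h1 : HasFDerivAt (fun y : Fin 3 → ℂ => v (y 1)) (v' • (ContinuousLinearMap.proj 1 : (Fin 3 → ℂ) →L[ℂ] ℂ)) t :=
    hv.comp_hasFDerivAt t (hasFDerivAt_apply 1 t)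
  have h2 : HasFDerivAt (fun y : Fin 3 → ℂ => w (y 2)) (w' • (ContinuousLinearMap.proj 2 : (Fin 3 → ℂ) →L[ℂ] ℂ)) t :=
    hw.comp_hasFDerivAt t (hasFDerivAt_apply 2 t)
  refine ((h0.mul h1).mul h2).congr_fderiv ?_
  ext x
  simp [ContinuousLinearMap.smul_apply, smul_eq_mul]
  ring

noncomputable def Fsh (h : ℂ → ℂ) : (Fin 3 → ℂ) → ℂ :=
  fun y => -(1/4) * y 0 * (y 1)^2 * 1 + 1/2 * (y 0)^2 * 1 * y 2 + 1 * (y 1)^4 * h (y 2)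
noncomputable def Pa : (Fin 3 → ℂ) → ℂ := fun y => -(1/4) * (y 1)^2 * 1 + y 0 * 1 * y 2
noncomputable def Pb (h : ℂ → ℂ) : (Fin 3 → ℂ) → ℂ :=
  fun y => -(1/2) * y 0 * y 1 * 1 + 1 * (4 * (y 1)^3) * h (y 2)
noncomputable def Pc (h1 : ℂ → ℂ) : (Fin 3 → ℂ) → ℂ :=
  fun y => 1/2 * (y 0)^2 * 1 * 1 + 1 * (y 1)^4 * h1 (y 2)
noncomputable def QA : (Fin 3 → ℂ) → ℂ := fun y => 1 * 1 * y 2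
noncomputable def QB : (Fin 3 → ℂ) → ℂ := fun y => 1 * (-(1/2) * y 1) * 1
noncomputable def QC : (Fin 3 → ℂ) → ℂ := fun y => y 0 * 1 * 1
noncomputable def QD (h : ℂ → ℂ) : (Fin 3 → ℂ) → ℂ :=
  fun y => -(1/2) * y 0 * 1 * 1 + 1 * (12 * (y 1)^2) * h (y 2)
noncomputable def QE (h1 : ℂ → ℂ) : (Fin 3 → ℂ) → ℂ := fun y => 1 * (4 * (y 1)^3) * h1 (y 2)
noncomputable def QF (h2 : ℂ → ℂ) : (Fin 3 → ℂ) → ℂ := fun y => 1 * (y 1)^4 * h2 (y 2)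

lemma pd_Fsh {h h1 : ℂ → ℂ} {y : Fin 3 → ℂ} (hd0 : HasDerivAt h (h1 (y 2)) (y 2)) (n : Fin 3) :
    pd n (Fsh h) y = ![Pa y, Pb h y, Pc h1 y] n := by
  have d1 := hasFDerivAt_mono ((hasDerivAt_id (y 0)).const_mul (-(1/4) : ℂ))
    (hasDerivAt_pow 2 (y 1)) (hasDerivAt_const (y 2) (1:ℂ))
  have d2 := hasFDerivAt_mono ((hasDerivAt_pow 2 (y 0)).const_mul ((1/2) : ℂ))
    (hasDerivAt_const (y 1) (1:ℂ)) (hasDerivAt_id (y 2))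
  have d3 := hasFDerivAt_mono (hasDerivAt_const (y 0) (1:ℂ)) (hasDerivAt_pow 4 (y 1)) hd0
  refine (pd_eval (G := Fsh h) ((d1.add d2).add d3) n).trans ?_
  fin_cases n <;>
    simp only [ContinuousLinearMap.add_apply, ContinuousLinearMap.smul_apply,
      ContinuousLinearMap.proj_apply, smul_eq_mul, Matrix.cons_val_zero, Matrix.cons_val_one,
      Matrix.head_cons, Fin.isValue, id_eq, Pi.single_apply, Fin.ext_iff, Pa, Pb, Pc, QA, QB, QC, QD, QE, QF] <;>
    norm_num [-mul_eq_mul_right_iff, -mul_eq_mul_left_iff] <;>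
    try ring

lemma pd_Pa (y : Fin 3 → ℂ) (n : Fin 3) : pd n Pa y = ![QA y, QB y, QC y] n := by
  have d1 := hasFDerivAt_mono (hasDerivAt_const (y 0) (-(1/4) : ℂ))
    (hasDerivAt_pow 2 (y 1)) (hasDerivAt_const (y 2) (1:ℂ))
  have d2 := hasFDerivAt_mono (hasDerivAt_id (y 0)) (hasDerivAt_const (y 1) (1:ℂ))
    (hasDerivAt_id (y 2))
  refine (pd_eval (G := Pa) (d1.add d2) n).trans ?_
  fin_cases n <;>
    simp only [ContinuousLinearMap.add_apply, ContinuousLinearMap.smul_apply,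
      ContinuousLinearMap.proj_apply, smul_eq_mul, Matrix.cons_val_zero, Matrix.cons_val_one,
      Matrix.head_cons, Fin.isValue, id_eq, Pi.single_apply, Fin.ext_iff, Pa, Pb, Pc, QA, QB, QC, QD, QE, QF] <;>
    norm_num [-mul_eq_mul_right_iff, -mul_eq_mul_left_iff] <;>
    try ring

lemma pd_Pb {h h1 : ℂ → ℂ} {y : Fin 3 → ℂ} (hd0 : HasDerivAt h (h1 (y 2)) (y 2)) (n : Fin 3) :
    pd n (Pb h) y = ![QB y, QD h y, QE h1 y] n := by
  have d1 := hasFDerivAt_mono ((hasDerivAt_id (y 0)).const_mul (-(1/2) : ℂ))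
    (hasDerivAt_id (y 1)) (hasDerivAt_const (y 2) (1:ℂ))
  have d2 := hasFDerivAt_mono (hasDerivAt_const (y 0) (1:ℂ))
    ((hasDerivAt_pow 3 (y 1)).const_mul (4:ℂ)) hd0
  refine (pd_eval (G := Pb h) (d1.add d2) n).trans ?_
  fin_cases n <;>
    simp only [ContinuousLinearMap.add_apply, ContinuousLinearMap.smul_apply,
      ContinuousLinearMap.proj_apply, smul_eq_mul, Matrix.cons_val_zero, Matrix.cons_val_one,
      Matrix.head_cons, Fin.isValue, id_eq, Pi.single_apply, Fin.ext_iff, Pa, Pb, Pc, QA, QB, QC, QD, QE, QF] <;>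
    norm_num [-mul_eq_mul_right_iff, -mul_eq_mul_left_iff] <;>
    try ring

lemma pd_Pc {h1 h2 : ℂ → ℂ} {y : Fin 3 → ℂ} (hd1 : HasDerivAt h1 (h2 (y 2)) (y 2)) (n : Fin 3) :
    pd n (Pc h1) y = ![QC y, QE h1 y, QF h2 y] n := by
  have d1 := hasFDerivAt_mono ((hasDerivAt_pow 2 (y 0)).const_mul ((1/2) : ℂ))
    (hasDerivAt_const (y 1) (1:ℂ)) (hasDerivAt_const (y 2) (1:ℂ))
  have d2 := hasFDerivAt_mono (hasDerivAt_const (y 0) (1:ℂ)) (hasDerivAt_pow 4 (y 1)) hd1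
  refine (pd_eval (G := Pc h1) (d1.add d2) n).trans ?_
  fin_cases n <;>
    simp only [ContinuousLinearMap.add_apply, ContinuousLinearMap.smul_apply,
      ContinuousLinearMap.proj_apply, smul_eq_mul, Matrix.cons_val_zero, Matrix.cons_val_one,
      Matrix.head_cons, Fin.isValue, id_eq, Pi.single_apply, Fin.ext_iff, Pa, Pb, Pc, QA, QB, QC, QD, QE, QF] <;>
    norm_num [-mul_eq_mul_right_iff, -mul_eq_mul_left_iff] <;>
    try ring

lemma pd_QA (y : Fin 3 → ℂ) (n : Fin 3) : pd n QA y = ![0, 0, 1] n := by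
  have d1 := hasFDerivAt_mono (hasDerivAt_const (y 0) (1:ℂ)) (hasDerivAt_const (y 1) (1:ℂ))
    (hasDerivAt_id (y 2))
  refine (pd_eval (G := QA) d1 n).trans ?_
  fin_cases n <;>
    simp only [ContinuousLinearMap.add_apply, ContinuousLinearMap.smul_apply,
      ContinuousLinearMap.proj_apply, smul_eq_mul, Matrix.cons_val_zero, Matrix.cons_val_one,
      Matrix.head_cons, Fin.isValue, id_eq, Pi.single_apply, Fin.ext_iff, Pa, Pb, Pc, QA, QB, QC, QD, QE, QF] <;>
    norm_num [-mul_eq_mul_right_iff, -mul_eq_mul_left_iff] <;>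
    try ring

lemma pd_QB (y : Fin 3 → ℂ) (n : Fin 3) : pd n QB y = ![0, -(1/2), 0] n := by
  have d1 := hasFDerivAt_mono (hasDerivAt_const (y 0) (1:ℂ))
    ((hasDerivAt_id (y 1)).const_mul (-(1/2) : ℂ)) (hasDerivAt_const (y 2) (1:ℂ))
  refine (pd_eval (G := QB) d1 n).trans ?_
  fin_cases n <;>
    simp only [ContinuousLinearMap.add_apply, ContinuousLinearMap.smul_apply,
      ContinuousLinearMap.proj_apply, smul_eq_mul, Matrix.cons_val_zero, Matrix.cons_val_one,
      Matrix.head_cons, Fin.isValue, id_eq, Pi.single_apply, Fin.ext_iff, Pa, Pb, Pc, QA, QB, QC, QD, QE, QF] <;>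
    norm_num [-mul_eq_mul_right_iff, -mul_eq_mul_left_iff] <;>
    try ring

lemma pd_QC (y : Fin 3 → ℂ) (n : Fin 3) : pd n QC y = ![1, 0, 0] n := by
  have d1 := hasFDerivAt_mono (hasDerivAt_id (y 0)) (hasDerivAt_const (y 1) (1:ℂ))
    (hasDerivAt_const (y 2) (1:ℂ))
  refine (pd_eval (G := QC) d1 n).trans ?_
  fin_cases n <;>
    simp only [ContinuousLinearMap.add_apply, ContinuousLinearMap.smul_apply,
      ContinuousLinearMap.proj_apply, smul_eq_mul, Matrix.cons_val_zero, Matrix.cons_val_one,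
      Matrix.head_cons, Fin.isValue, id_eq, Pi.single_apply, Fin.ext_iff, Pa, Pb, Pc, QA, QB, QC, QD, QE, QF] <;>
    norm_num [-mul_eq_mul_right_iff, -mul_eq_mul_left_iff] <;>
    try ring

lemma pd_QD {h h1 : ℂ → ℂ} {y : Fin 3 → ℂ} (hd0 : HasDerivAt h (h1 (y 2)) (y 2)) (n : Fin 3) :
    pd n (QD h) y = ![-(1/2), 24 * y 1 * h (y 2), 12 * (y 1)^2 * h1 (y 2)] n := by
  have d1 := hasFDerivAt_mono ((hasDerivAt_id (y 0)).const_mul (-(1/2) : ℂ))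
    (hasDerivAt_const (y 1) (1:ℂ)) (hasDerivAt_const (y 2) (1:ℂ))
  have d2 := hasFDerivAt_mono (hasDerivAt_const (y 0) (1:ℂ))
    ((hasDerivAt_pow 2 (y 1)).const_mul (12:ℂ)) hd0
  refine (pd_eval (G := QD h) (d1.add d2) n).trans ?_
  fin_cases n <;>
    simp only [ContinuousLinearMap.add_apply, ContinuousLinearMap.smul_apply,
      ContinuousLinearMap.proj_apply, smul_eq_mul, Matrix.cons_val_zero, Matrix.cons_val_one,
      Matrix.head_cons, Fin.isValue, id_eq, Pi.single_apply, Fin.ext_iff, Pa, Pb, Pc, QA, QB, QC, QD, QE, QF] <;>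
    norm_num [-mul_eq_mul_right_iff, -mul_eq_mul_left_iff] <;>
    try ring

lemma pd_QE {h1 h2 : ℂ → ℂ} {y : Fin 3 → ℂ} (hd1 : HasDerivAt h1 (h2 (y 2)) (y 2)) (n : Fin 3) :
    pd n (QE h1) y = ![0, 12 * (y 1)^2 * h1 (y 2), 4 * (y 1)^3 * h2 (y 2)] n := by
  have d1 := hasFDerivAt_mono (hasDerivAt_const (y 0) (1:ℂ))
    ((hasDerivAt_pow 3 (y 1)).const_mul (4:ℂ)) hd1
  refine (pd_eval (G := QE h1) d1 n).trans ?_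
  fin_cases n <;>
    simp only [ContinuousLinearMap.add_apply, ContinuousLinearMap.smul_apply,
      ContinuousLinearMap.proj_apply, smul_eq_mul, Matrix.cons_val_zero, Matrix.cons_val_one,
      Matrix.head_cons, Fin.isValue, id_eq, Pi.single_apply, Fin.ext_iff, Pa, Pb, Pc, QA, QB, QC, QD, QE, QF] <;>
    norm_num [-mul_eq_mul_right_iff, -mul_eq_mul_left_iff] <;>
    try ring

lemma pd_QF {h2 h3 : ℂ → ℂ} {y : Fin 3 → ℂ} (hd2 : HasDerivAt h2 (h3 (y 2)) (y 2)) (n : Fin 3) :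
    pd n (QF h2) y = ![0, 4 * (y 1)^3 * h2 (y 2), (y 1)^4 * h3 (y 2)] n := by
  have d1 := hasFDerivAt_mono (hasDerivAt_const (y 0) (1:ℂ)) (hasDerivAt_pow 4 (y 1)) hd2
  refine (pd_eval (G := QF h2) d1 n).trans ?_
  fin_cases n <;>
    simp only [ContinuousLinearMap.add_apply, ContinuousLinearMap.smul_apply,
      ContinuousLinearMap.proj_apply, smul_eq_mul, Matrix.cons_val_zero, Matrix.cons_val_one,
      Matrix.head_cons, Fin.isValue, id_eq, Pi.single_apply, Fin.ext_iff, Pa, Pb, Pc, QA, QB, QC, QD, QE, QF] <;>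
    norm_num [-mul_eq_mul_right_iff, -mul_eq_mul_left_iff] <;>
    try ring

lemma pd_congr_on {f g : (Fin 3 → ℂ) → ℂ} {S : Set (Fin 3 → ℂ)} (hS : IsOpen S)
    (h : ∀ y ∈ S, f y = g y) {t : Fin 3 → ℂ} (ht : t ∈ S) (n : Fin 3) :
    pd n f t = pd n g t := by
  unfold pd
  rw [Filter.EventuallyEq.fderiv_eq (Filter.eventuallyEq_of_mem (hS.mem_nhds ht) h)]

lemma fmat_entries {h h1 h2 h3 : ℂ → ℂ} {V : Set ℂ} (hV : IsOpen V)
    (hd0 : ∀ z ∈ V, HasDerivAt h (h1 z) z) (hd1 : ∀ z ∈ V, HasDerivAt h1 (h2 z) z)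
    (hd2 : ∀ z ∈ V, HasDerivAt h2 (h3 z) z) {t : Fin 3 → ℂ} (ht : t 2 ∈ V) :
    ∀ i m n : Fin 3, pd i (pd m (pd n (Fsh h))) t =
      ![![![0,0,1], ![0,-(1/2),0], ![1,0,0]],
        ![![0,-(1/2),0], ![-(1/2), 24 * t 1 * h (t 2), 12*(t 1)^2*h1 (t 2)],
          ![0, 12*(t 1)^2*h1 (t 2), 4*(t 1)^3*h2 (t 2)]],
        ![![1,0,0], ![0, 12*(t 1)^2*h1 (t 2), 4*(t 1)^3*h2 (t 2)],
          ![0, 4*(t 1)^3*h2 (t 2), (t 1)^4*h3 (t 2)]]] i m n := by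
  intro i m n
  have hS : IsOpen {y : Fin 3 → ℂ | y 2 ∈ V} := hV.preimage (continuous_apply 2)
  set S := {y : Fin 3 → ℂ | y 2 ∈ V} with hSdef
  have hmem : t ∈ S := ht
  have eP0 : ∀ y' ∈ S, pd 0 (Fsh h) y' = Pa y' :=
    fun y' hy' => by simpa using pd_Fsh (h1 := h1) (hd0 _ hy') 0
  have eP1 : ∀ y' ∈ S, pd 1 (Fsh h) y' = Pb h y' :=
    fun y' hy' => by simpa using pd_Fsh (h1 := h1) (hd0 _ hy') 1
  have eP2 : ∀ y' ∈ S, pd 2 (Fsh h) y' = Pc h1 y' :=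
    fun y' hy' => by simpa using pd_Fsh (h1 := h1) (hd0 _ hy') 2
  have eQ00 : ∀ y ∈ S, pd 0 (pd 0 (Fsh h)) y = QA y :=
    fun y hy => (pd_congr_on hS eP0 hy 0).trans (by simpa using pd_Pa y 0)
  have eQ10 : ∀ y ∈ S, pd 1 (pd 0 (Fsh h)) y = QB y :=
    fun y hy => (pd_congr_on hS eP0 hy 1).trans (by simpa using pd_Pa y 1)
  have eQ20 : ∀ y ∈ S, pd 2 (pd 0 (Fsh h)) y = QC y :=
    fun y hy => (pd_congr_on hS eP0 hy 2).trans (by simpa using pd_Pa y 2)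
  have eQ01 : ∀ y ∈ S, pd 0 (pd 1 (Fsh h)) y = QB y :=
    fun y hy => (pd_congr_on hS eP1 hy 0).trans (by simpa using pd_Pb (h1 := h1) (hd0 _ hy) 0)
  have eQ11 : ∀ y ∈ S, pd 1 (pd 1 (Fsh h)) y = QD h y :=
    fun y hy => (pd_congr_on hS eP1 hy 1).trans (by simpa using pd_Pb (h1 := h1) (hd0 _ hy) 1)
  have eQ21 : ∀ y ∈ S, pd 2 (pd 1 (Fsh h)) y = QE h1 y :=
    fun y hy => (pd_congr_on hS eP1 hy 2).trans (by simpa using pd_Pb (h1 := h1) (hd0 _ hy) 2)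
  have eQ02 : ∀ y ∈ S, pd 0 (pd 2 (Fsh h)) y = QC y :=
    fun y hy => (pd_congr_on hS eP2 hy 0).trans (by simpa using pd_Pc (h2 := h2) (hd1 _ hy) 0)
  have eQ12 : ∀ y ∈ S, pd 1 (pd 2 (Fsh h)) y = QE h1 y :=
    fun y hy => (pd_congr_on hS eP2 hy 1).trans (by simpa using pd_Pc (h2 := h2) (hd1 _ hy) 1)
  have eQ22 : ∀ y ∈ S, pd 2 (pd 2 (Fsh h)) y = QF h2 y :=
    fun y hy => (pd_congr_on hS eP2 hy 2).trans (by simpa using pd_Pc (h2 := h2) (hd1 _ hy) 2)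
  fin_cases m <;> fin_cases n
  · exact (pd_congr_on hS eQ00 hmem i).trans ((pd_QA t i).trans (by fin_cases i <;> norm_num))
  · exact (pd_congr_on hS eQ01 hmem i).trans ((pd_QB t i).trans (by fin_cases i <;> norm_num))
  · exact (pd_congr_on hS eQ02 hmem i).trans ((pd_QC t i).trans (by fin_cases i <;> norm_num))
  · exact (pd_congr_on hS eQ10 hmem i).trans ((pd_QB t i).trans (by fin_cases i <;> norm_num))
  · exact (pd_congr_on hS eQ11 hmem i).trans ((pd_QD (h1 := h1) (hd0 _ ht) i).trans (by fin_cases i <;> norm_num))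
  · exact (pd_congr_on hS eQ12 hmem i).trans ((pd_QE (h2 := h2) (hd1 _ ht) i).trans (by fin_cases i <;> norm_num))
  · exact (pd_congr_on hS eQ20 hmem i).trans ((pd_QC t i).trans (by fin_cases i <;> norm_num))
  · exact (pd_congr_on hS eQ21 hmem i).trans ((pd_QE (h2 := h2) (hd1 _ ht) i).trans (by fin_cases i <;> norm_num))
  · exact (pd_congr_on hS eQ22 hmem i).trans ((pd_QF (h3 := h3) (hd2 _ ht) i).trans (by fin_cases i <;> norm_num))

set_option maxHeartbeats 1000000 in
/-- if `γ` is holomorphic on an open set `U` and satisfies the Chazy equation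
there, and `q ≠ 0`, then the deformed prepotential `F = Fdef γ q` satisfies the WDVV system
(`F₁` invertible and `F_i·F₁⁻¹·F_j = F_j·F₁⁻¹·F_i`) at every point `t` with
`1 − 2πi t₃/q ≠ 0` and `2πi t₃/(1 − 2πi t₃/q) ∈ U`. -/
theorem deformed_prepotential_wdvv
    (U : Set ℂ) (hU : IsOpen U) (γ : ℂ → ℂ)
    (hγ : DifferentiableOn ℂ γ U)
    (hChazy : ∀ μ ∈ U,
      iteratedDeriv 3 γ μ = 6 * γ μ * iteratedDeriv 2 γ μ - 9 * (deriv γ μ) ^ 2)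
    (q : ℂ) (hq : q ≠ 0) :
    ∀ t : Fin 3 → ℂ,
      1 - 2 * (π : ℂ) * I * t 2 / q ≠ 0 →
      2 * (π : ℂ) * I * t 2 / (1 - 2 * (π : ℂ) * I * t 2 / q) ∈ U →
      IsUnit (Fmat (Fdef γ q) t 0) ∧
      ∀ i j : Fin 3,
        Fmat (Fdef γ q) t i * (Fmat (Fdef γ q) t 0)⁻¹ * Fmat (Fdef γ q) t j
          = Fmat (Fdef γ q) t j * (Fmat (Fdef γ q) t 0)⁻¹ * Fmat (Fdef γ q) t i := by
  intro t hst hmU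
  have hst' : sf q (t 2) ≠ 0 := hst
  have hmU' : mf q (t 2) ∈ U := hmU
  have hA0 : AnalyticOnNhd ℂ γ U := hγ.analyticOnNhd hU
  have hA1 := hA0.deriv
  have hA2 := hA1.deriv
  set V : Set ℂ := {z | sf q z ≠ 0 ∧ mf q z ∈ U} with hVdef
  have hcs : Continuous (sf q) := by
    have : Continuous (fun z : ℂ => 1 - 2 * (π:ℂ) * I * z / q) := by fun_prop
    exact this
  have hAopen : IsOpen {z : ℂ | sf q z ≠ 0} := isOpen_ne.preimage hcs
  have hmcont : ContinuousOn (mf q) {z : ℂ | sf q z ≠ 0} := by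
    have : ContinuousOn (fun z : ℂ => 2 * (π:ℂ) * I * z / sf q z) {z : ℂ | sf q z ≠ 0} :=
      ContinuousOn.div (by fun_prop) hcs.continuousOn (fun z hz => hz)
    exact this
  have hV : IsOpen V := hmcont.isOpen_inter_preimage hAopen hU
  have hd0 : ∀ z ∈ V, HasDerivAt (hf0 γ q) (hf1 γ q z) z := fun z hz =>
    hasDerivAt_hf0 hq hz.1 ((hA0 _ hz.2).differentiableAt.hasDerivAt)
  have hd1 : ∀ z ∈ V, HasDerivAt (hf1 γ q) (hf2 γ q z) z := fun z hz =>
    hasDerivAt_hf1 hq hz.1 ((hA0 _ hz.2).differentiableAt.hasDerivAt)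
      ((hA1 _ hz.2).differentiableAt.hasDerivAt)
  have hd2 : ∀ z ∈ V, HasDerivAt (hf2 γ q) (hf3 γ q z) z := fun z hz =>
    hasDerivAt_hf2 hq hz.1 ((hA0 _ hz.2).differentiableAt.hasDerivAt)
      ((hA1 _ hz.2).differentiableAt.hasDerivAt)
      ((hA2 _ hz.2).differentiableAt.hasDerivAt)
  have ht2 : t 2 ∈ V := ⟨hst', hmU'⟩
  have hEnt := fmat_entries hV hd0 hd1 hd2 ht2
  have hFdef : Fdef γ q = Fsh (hf0 γ q) := by
    funext y; simp only [Fdef, Fsh, hf0, sf, mf]; ring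
  have hM : ∀ i, Fmat (Fdef γ q) t i = Matrix.of (fun m n =>
      ![![![0,0,1], ![0,-(1/2),0], ![1,0,0]],
        ![![0,-(1/2),0],
          ![-(1/2), 24 * t 1 * hf0 γ q (t 2), 12*(t 1)^2* hf1 γ q (t 2)],
          ![0, 12*(t 1)^2* hf1 γ q (t 2), 4*(t 1)^3* hf2 γ q (t 2)]],
        ![![1,0,0],
          ![0, 12*(t 1)^2* hf1 γ q (t 2), 4*(t 1)^3* hf2 γ q (t 2)],
          ![0, 4*(t 1)^3* hf2 γ q (t 2), (t 1)^4* hf3 γ q (t 2)]]] i m n) := by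
    intro i; ext m n
    show pd i (pd m (pd n (Fdef γ q))) t = _
    rw [hFdef]
    exact hEnt i m n
  have hAB : Fmat (Fdef γ q) t 0 * (!![0,0,1; 0,-2,0; 1,0,0] : Matrix (Fin 3) (Fin 3) ℂ)
      = 1 := by
    rw [hM 0]
    ext m n
    fin_cases m <;> fin_cases n <;>
      simp [Matrix.mul_apply, Fin.sum_univ_three, Matrix.one_apply,
        Matrix.vecHead, Matrix.vecTail] <;> norm_num
  have hUnit : IsUnit (Fmat (Fdef γ q) t 0) :=
    (Matrix.isUnit_iff_isUnit_det _).2 (Matrix.isUnit_det_of_right_inverse hAB)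
  have hInv : (Fmat (Fdef γ q) t 0)⁻¹ = !![0,0,1; 0,-2,0; 1,0,0] :=
    Matrix.inv_eq_right_inv hAB
  have e2 : iteratedDeriv 2 γ = deriv (deriv γ) := by
    rw [show (2:ℕ) = 1+1 from rfl, iteratedDeriv_succ, iteratedDeriv_one]
  have e3 : iteratedDeriv 3 γ = deriv (deriv (deriv γ)) := by
    rw [show (3:ℕ) = 2+1 from rfl, iteratedDeriv_succ, show (2:ℕ) = 1+1 from rfl,
      iteratedDeriv_succ, iteratedDeriv_one]
  have hCz := hChazy (mf q (t 2)) hmU'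
  rw [e2, e3] at hCz
  have hkey : hf3 γ q (t 2)
      = 576 * hf1 γ q (t 2)^2 - 384 * hf0 γ q (t 2) * hf2 γ q (t 2) :=
    hf_key hq hst' hCz
  have hBA : (!![0,0,1; 0,-2,0; 1,0,0] : Matrix (Fin 3) (Fin 3) ℂ) * Fmat (Fdef γ q) t 0
      = 1 := by
    rw [hM 0]
    ext m n
    fin_cases m <;> fin_cases n <;>
      simp [Matrix.mul_apply, Fin.sum_univ_three, Matrix.one_apply,
        Matrix.vecHead, Matrix.vecTail] <;> norm_num
  have hcomm : Fmat (Fdef γ q) t 1 * !![0,0,1; 0,-2,0; 1,0,0] * Fmat (Fdef γ q) t 2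
      = Fmat (Fdef γ q) t 2 * !![0,0,1; 0,-2,0; 1,0,0] * Fmat (Fdef γ q) t 1 := by
    rw [hM 1, hM 2]
    simp only [hkey]
    ext m n
    fin_cases m <;> fin_cases n <;>
      (simp [Matrix.mul_apply, Fin.sum_univ_three, Matrix.vecHead, Matrix.vecTail,
        -mul_eq_mul_right_iff, -mul_eq_mul_left_iff]; try ring)
  have h0j : ∀ j : Fin 3, Fmat (Fdef γ q) t 0 * !![0,0,1; 0,-2,0; 1,0,0] * Fmat (Fdef γ q) t j
      = Fmat (Fdef γ q) t j * !![0,0,1; 0,-2,0; 1,0,0] * Fmat (Fdef γ q) t 0 := by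
    intro j; rw [hAB, one_mul, mul_assoc, hBA, mul_one]
  refine ⟨hUnit, ?_⟩
  intro i j
  rw [hInv]
  fin_cases i <;> fin_cases j
  · rfl
  · exact h0j _
  · exact h0j _
  · exact (h0j _).symm
  · rfl
  · exact hcomm
  · exact (h0j _).symm
  · exact hcomm.symm
  · rfl
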